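/- For the symmetric matrix pencil A(x) = [[x₀,0,x₁,x₂],[0,x₀,x₂,x₃],[x₁,x₂,x₄,0],[x₂,x₃,0,x₄]], the quartic hypersurface det A(x) = 0 in ℙ⁴ is singular along the quadratic surface V(x₁ + x₃, x₀x₄ − x₂² − x₃²): det A and all its partial derivatives vanish whenever x₁ = −x₃ and x₀x₄ = x₂² + x₃². -/

import Mathlib

open MvPolynomial Matrix

/-- The symmetric matrix pencil `A(x) = [[x₀,0,x₁,x₂],[0,x₀,x₂,x₃],[x₁,x₂,x₄,0],[x₂,x₃,0,x₄]]`. -/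
noncomputable def pencilB : Matrix (Fin 4) (Fin 4) (MvPolynomial (Fin 5) ℂ) :=
  !![X 0, 0, X 1, X 2;
     0, X 0, X 2, X 3;
     X 1, X 2, X 4, 0;
     X 2, X 3, 0, X 4]

/-!
Writing `ℓ = x₁ + x₃` and `q = x₀x₄ − x₂² − x₃²`, one has
`det A = q (q + 2 x₃ ℓ) − ℓ² (x₀x₄ − x₃²)`, so `det A` lies in the square of the ideal `(ℓ, q)`.
By the Leibniz rule, a polynomial in the square of the maximal ideal of a point vanishes there
together with all its partial derivatives.
-/

namespace MvPolynomial

theorem eval_pderiv_eq_zero_of_mem_ker_eval_sq {R σ : Type*} [CommSemiring R] {x : σ → R}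
    {p : MvPolynomial σ R} (hp : p ∈ RingHom.ker (eval x) ^ 2) (i : σ) :
    eval x (pderiv i p) = 0 := by
  rw [pow_two] at hp
  refine Submodule.mul_induction_on hp (fun f hf g hg ↦ ?_) (fun f g hf hg ↦ ?_)
  · rw [RingHom.mem_ker] at hf hg
    simp [Derivation.leibniz, hf, hg]
  · simp [hf, hg]

end MvPolynomial

theorem det_pencilB : pencilB.det =
    (X 0 * X 4 - X 2 ^ 2 - X 3 ^ 2) * (X 0 * X 4 - X 2 ^ 2 - X 3 ^ 2 + 2 * X 3 * (X 1 + X 3))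
      - (X 1 + X 3) * ((X 1 + X 3) * (X 0 * X 4 - X 3 ^ 2)) := by
  simp [pencilB, Matrix.det_succ_row_zero, Fin.sum_univ_succ,
    show (2 : Fin 4).succAbove 2 = 3 from rfl, show (3 : Fin 4).succAbove 2 = 2 from rfl]
  ring

/-- The quartic `det A(x) = 0` in `ℙ⁴` is singular along the quadratic surface
`V(x₁ + x₃, x₀x₄ − x₂² − x₃²)`. -/
theorem symmetroid_singular_along_quadric' (x : Fin 5 → ℂ)
    (h1 : x 1 = -(x 3)) (hq : x 0 * x 4 = x 2 ^ 2 + x 3 ^ 2) :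
    eval x pencilB.det = 0 ∧ ∀ i : Fin 5, eval x (pderiv i pencilB.det) = 0 := by
  set 𝔪 := RingHom.ker (eval x)
  have hℓ𝔪 : X 1 + X 3 ∈ 𝔪 := by simp [𝔪, RingHom.mem_ker, h1]
  have hq𝔪 : X 0 * X 4 - X 2 ^ 2 - X 3 ^ 2 ∈ 𝔪 := by simp [𝔪, RingHom.mem_ker, hq]
  have hdet : pencilB.det ∈ 𝔪 ^ 2 := by
    rw [det_pencilB, pow_two]
    exact sub_mem (Ideal.mul_mem_mul hq𝔪 (add_mem hq𝔪 (Ideal.mul_mem_left _ _ hℓ𝔪)))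
      (Ideal.mul_mem_mul hℓ𝔪 (Ideal.mul_mem_right _ _ hℓ𝔪))
  exact ⟨Ideal.pow_le_self two_ne_zero hdet, eval_pderiv_eq_zero_of_mem_ker_eval_sq hdet⟩
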